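/- Let θ_{t+1} = HT_s(z) where z = θ_t − γ g, and let θ̂ be s*-sparse with s* ≤ s. Let Ŝ_{t+1} be the union of the support of θ_{t+1} and the support of θ̂. Then ‖θ_{t+1} − θ̂‖ ≤ (1 + sqrt(s*/s)) · ‖[z]_{Ŝ_{t+1}} − θ̂‖, where [z]_S keeps the entries of z indexed by S and zeroes the rest. -/

import Mathlib

open Finset
open scoped RealInnerProductSpace

noncomputable def htSet {d : ℕ} (k : ℕ) (x : EuclideanSpace ℝ (Fin d)) : Finset (Fin d) :=
  (Finset.exists_max_image ((Finset.univ : Finset (Fin d)).powersetCard (min k d))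
    (fun S => ∑ i ∈ S, (x i) ^ 2)
    ((Finset.powersetCard_nonempty).2 (by simp))).choose

/-- Hard thresholding: keep the `k` entries of largest magnitude, zero the rest. -/
noncomputable def HT {d : ℕ} (k : ℕ) (x : EuclideanSpace ℝ (Fin d)) : EuclideanSpace ℝ (Fin d) :=
  WithLp.toLp 2 (fun i => if i ∈ htSet k x then x i else 0)

/-- Support of a vector. -/
noncomputable def supp {d : ℕ} (x : EuclideanSpace ℝ (Fin d)) : Finset (Fin d) :=
  Finset.univ.filter (fun i => x i ≠ 0)

/-- Restriction of a vector to an index set. -/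
noncomputable def restr {d : ℕ} (S : Finset (Fin d)) (x : EuclideanSpace ℝ (Fin d)) :
    EuclideanSpace ℝ (Fin d) :=
  WithLp.toLp 2 (fun i => if i ∈ S then x i else 0)

/-- ℓ1 norm. -/
noncomputable def l1norm {d : ℕ} (x : EuclideanSpace ℝ (Fin d)) : ℝ := ∑ i, |x i|

/-- ℓ∞ norm. -/
noncomputable def linf {d : ℕ} (x : EuclideanSpace ℝ (Fin d)) : ℝ := ⨆ i, |x i|

/-!
Let `T` be the index set kept by hard thresholding, `U = supp θ̂` and `x = [z]_Ŝ`. Then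
`HT_s z - x` is `-[z]_{U \ T}`, while `x - θ̂` agrees with `z` on `T \ U`. Every entry of `z` on
`U \ T` is dominated by every entry on `T`, and `|T| = s`, `|U| ≤ s* ≤ s` force
`s |U \ T| ≤ s* |T \ U|`; averaging gives `‖HT_s z - x‖² ≤ (s*/s) ‖x - θ̂‖²`, and the triangle
inequality through `x` concludes.
-/

namespace Finset

variable {ι : Type*}

theorem card_mul_sum_le_card_mul_sum {P Q : Finset ι} {f : ι → ℝ}
    (h : ∀ i ∈ P, ∀ j ∈ Q, f i ≤ f j) :
    (#Q : ℝ) * ∑ i ∈ P, f i ≤ #P * ∑ j ∈ Q, f j := by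
  calc (#Q : ℝ) * ∑ i ∈ P, f i = ∑ i ∈ P, ∑ _j ∈ Q, f i := by
        rw [mul_sum]; simp
    _ ≤ ∑ _i ∈ P, ∑ j ∈ Q, f j := sum_le_sum fun i hi => sum_le_sum fun j hj => h i hi j hj
    _ = #P * ∑ j ∈ Q, f j := by simp

variable [Fintype ι] [DecidableEq ι]

theorem mul_card_sdiff_le {A B : Finset ι} {a b : ℕ} (hA : #A ≤ a) (hab : a ≤ b)
    (hB : #B = min b (Fintype.card ι)) : b * #(A \ B) ≤ a * #(B \ A) := by
  rcases min_cases b (Fintype.card ι) with ⟨hmin, _⟩ | ⟨hmin, _⟩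
  · have hAB := card_sdiff_add_card_inter A B
    have hBA := card_sdiff_add_card_inter B A
    rw [inter_comm] at hBA
    nlinarith
  · rw [hmin] at hB
    simp [eq_univ_of_card B hB, sdiff_eq_empty_iff_subset.2 (subset_univ A)]

theorem sum_sdiff_le_div_mul_sum_sdiff {A B : Finset ι} {a b : ℕ} {f : ι → ℝ}
    (hf : ∀ i, 0 ≤ f i) (hdom : ∀ i ∈ A \ B, ∀ j ∈ B \ A, f i ≤ f j) (hA : #A ≤ a)
    (hab : a ≤ b) (hB : #B = min b (Fintype.card ι)) :
    ∑ i ∈ A \ B, f i ≤ a / b * ∑ j ∈ B \ A, f j := by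
  obtain hP | hP := (A \ B).eq_empty_or_nonempty
  · simp only [hP, sum_empty]
    exact mul_nonneg (by positivity) (sum_nonneg fun j _ => hf j)
  have hp : 0 < #(A \ B) := hP.card_pos
  have hb : 0 < b := by have := card_le_card (sdiff_subset (s := A) (t := B)); omega
  have hcard := mul_card_sdiff_le hA hab hB
  have hq : 0 < #(B \ A) := by
    by_contra! hq
    rw [Nat.le_zero.1 hq, mul_zero] at hcard
    exact (Nat.mul_pos hb hp).ne' (Nat.le_zero.1 hcard)
  have hsum := card_mul_sum_le_card_mul_sum hdom
  have hcard' : (b : ℝ) * #(A \ B) ≤ a * #(B \ A) := by exact_mod_cast hcard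
  have hY : 0 ≤ ∑ j ∈ B \ A, f j := sum_nonneg fun j _ => hf j
  rw [div_mul_eq_mul_div, le_div_iff₀ (by positivity)]
  have hq' : (0 : ℝ) < #(B \ A) := by exact_mod_cast hq
  nlinarith [mul_le_mul_of_nonneg_left hsum (Nat.cast_nonneg (α := ℝ) b),
    mul_le_mul_of_nonneg_right hcard' hY]

end Finset

section HardThresholding

variable {d : ℕ}

theorem htSet_spec (k : ℕ) (x : EuclideanSpace ℝ (Fin d)) :
    htSet k x ∈ (univ : Finset (Fin d)).powersetCard (min k d) ∧
      ∀ S ∈ (univ : Finset (Fin d)).powersetCard (min k d),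
        ∑ i ∈ S, x i ^ 2 ≤ ∑ i ∈ htSet k x, x i ^ 2 :=
  (exists_max_image ((univ : Finset (Fin d)).powersetCard (min k d))
    (fun S => ∑ i ∈ S, x i ^ 2) (powersetCard_nonempty.2 (by simp))).choose_spec

theorem card_htSet (k : ℕ) (x : EuclideanSpace ℝ (Fin d)) : #(htSet k x) = min k d := by
  simpa using (mem_powersetCard.1 (htSet_spec k x).1).2

/-- Swapping an index outside `htSet k x` for one inside cannot increase the captured energy. -/
theorem sq_le_sq_of_notMem_htSet (k : ℕ) (x : EuclideanSpace ℝ (Fin d)) {i j : Fin d}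
    (hi : i ∉ htSet k x) (hj : j ∈ htSet k x) : x i ^ 2 ≤ x j ^ 2 := by
  have hi' : i ∉ (htSet k x).erase j := fun h => hi (mem_of_mem_erase h)
  have hcard : #(insert i ((htSet k x).erase j)) = min k d := by
    rw [card_insert_of_notMem hi', card_erase_of_mem hj, card_htSet]
    have := card_htSet k x ▸ card_pos.2 ⟨j, hj⟩
    omega
  have hmax := (htSet_spec k x).2 _ (mem_powersetCard.2 ⟨subset_univ _, hcard⟩)
  rw [sum_insert hi', ← add_sum_erase _ _ hj] at hmax
  linarith

theorem HT_sub_restr_supp_HT_union (k : ℕ) (x : EuclideanSpace ℝ (Fin d)) (U : Finset (Fin d)) :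
    HT k x - restr (supp (HT k x) ∪ U) x = -restr (U \ htSet k x) x := by
  ext i
  by_cases hi : i ∈ htSet k x <;> by_cases hx : x i = 0 <;> simp [HT, restr, supp, hi, hx]

theorem restr_supp_HT_union_sub_apply (k : ℕ) (x y : EuclideanSpace ℝ (Fin d)) {j : Fin d}
    (hj : j ∈ htSet k x \ supp y) : (restr (supp (HT k x) ∪ supp y) x - y) j = x j := by
  rw [mem_sdiff] at hj
  by_cases hx : x j = 0 <;> simp_all [HT, restr, supp]

theorem norm_restr_sq (S : Finset (Fin d)) (x : EuclideanSpace ℝ (Fin d)) :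
    ‖restr S x‖ ^ 2 = ∑ i ∈ S, x i ^ 2 := by
  simp [EuclideanSpace.real_norm_sq_eq, restr, sum_ite_mem]

end HardThresholding

theorem norm_HT_sub_restr_le {d s a : ℕ} (z θ : EuclideanSpace ℝ (Fin d))
    (hθ : #(supp θ) ≤ a) (has : a ≤ s) :
    ‖HT s z - restr (supp (HT s z) ∪ supp θ) z‖ ≤
      √((a : ℝ) / s) * ‖restr (supp (HT s z) ∪ supp θ) z - θ‖ := by
  set E := restr (supp (HT s z) ∪ supp θ) z - θ
  set T := htSet s z
  have henergy : ∑ i ∈ supp θ \ T, z i ^ 2 ≤ a / s * ∑ j ∈ T \ supp θ, z j ^ 2 :=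
    sum_sdiff_le_div_mul_sum_sdiff (fun i => sq_nonneg _)
      (fun i hi j hj => sq_le_sq_of_notMem_htSet s z (mem_sdiff.1 hi).2 (mem_sdiff.1 hj).1)
      hθ has (by rw [card_htSet, Fintype.card_fin])
  have hE : ∑ j ∈ T \ supp θ, z j ^ 2 ≤ ‖E‖ ^ 2 := by
    rw [EuclideanSpace.real_norm_sq_eq]
    calc ∑ j ∈ T \ supp θ, z j ^ 2 = ∑ j ∈ T \ supp θ, E j ^ 2 :=
          sum_congr rfl fun j hj => by rw [restr_supp_HT_union_sub_apply s z θ hj]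
      _ ≤ ∑ j, E j ^ 2 := sum_le_univ_sum_of_nonneg fun j => sq_nonneg _
  rw [HT_sub_restr_supp_HT_union, norm_neg, ← Real.sqrt_sq (norm_nonneg E),
    ← Real.sqrt_mul (by positivity)]
  apply Real.le_sqrt_of_sq_le
  rw [norm_restr_sq]
  exact henergy.trans (mul_le_mul_of_nonneg_left hE (by positivity))

theorem stmt2 (d s sstar : ℕ) (h : sstar ≤ s) (γ : ℝ)
    (θt g θhat : EuclideanSpace ℝ (Fin d)) (hsp : (supp θhat).card ≤ sstar) :
    ‖HT s (θt - γ • g) - θhat‖ ≤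
      (1 + Real.sqrt ((sstar : ℝ) / s)) *
        ‖restr (supp (HT s (θt - γ • g)) ∪ supp θhat) (θt - γ • g) - θhat‖ := by
  set z := θt - γ • g
  set S := supp (HT s z) ∪ supp θhat
  calc ‖HT s z - θhat‖ ≤ ‖HT s z - restr S z‖ + ‖restr S z - θhat‖ :=
        norm_sub_le_norm_sub_add_norm_sub _ _ _
    _ ≤ √((sstar : ℝ) / s) * ‖restr S z - θhat‖ + ‖restr S z - θhat‖ := by
        gcongr
        exact norm_HT_sub_restr_le z θhat hsp h
    _ = (1 + √((sstar : ℝ) / s)) * ‖restr S z - θhat‖ := by ring
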